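/- arXiv:1702.03816 — 2 statements merged into one kernel-verified Lean document; each statement's English description precedes it below -/
import Mathlib

section
/- Let λ ∈ ℝ, q₁, q₂ : ℝ → ℝ continuous, and let F : ℝ → Matrix (Fin 2) (Fin 2) ℝ be differentiable with F'(x) = ![![λ, q₁(x)], ![q₂(x), −λ]] · F(x), with entries f₁₁, f₁₂ (first row) and f₂₁, f₂₂ (second row). Fix A, B, C ∈ ℝ and define P̃ := A·f₁₁² + B·f₁₁·f₁₂ + C·f₁₂², Q̃ := A·f₂₁² + B·f₂₁·f₂₂ + C·f₂₂², and Φ := A·f₁₁·f₂₁ + (B/2)·(f₁₁·f₂₂ + f₁₂·f₂₁) + C·f₁₂·f₂₂. Then Φ is differentiable and Φ'(x) = q₂(x)·P̃(x) + q₁(x)·Q̃(x) for all x ∈ ℝ. -/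
/-! Write the rows of `F` as `u = (f₁₁, f₁₂)` and `v = (f₂₁, f₂₂)` and let `b` be the polar form of
`A a² + B a b + C b²`, so that `P̃ = b(u, u)`, `Q̃ = b(v, v)` and `Φ = b(u, v)`. The Dirac equation
reads `u' = λu + q₁v`, `v' = q₂u − λv`, hence `Φ' = b(u', v) + b(u, v') = q₂ b(u, u) + q₁ b(v, v)`:
the two `λ b(u, v)` terms cancel because the coefficient matrix is traceless. -/

/-- `P̃ = A·f₁₁² + B·f₁₁·f₁₂ + C·f₁₂²` built from the first row of `F`. -/
def diracP (A B C : ℝ) (F : ℝ → Matrix (Fin 2) (Fin 2) ℝ) (x : ℝ) : ℝ :=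
  A * (F x 0 0) ^ 2 + B * (F x 0 0) * (F x 0 1) + C * (F x 0 1) ^ 2

/-- `Q̃ = A·f₂₁² + B·f₂₁·f₂₂ + C·f₂₂²` built from the second row of `F`. -/
def diracQ (A B C : ℝ) (F : ℝ → Matrix (Fin 2) (Fin 2) ℝ) (x : ℝ) : ℝ :=
  A * (F x 1 0) ^ 2 + B * (F x 1 0) * (F x 1 1) + C * (F x 1 1) ^ 2

/-- Mixed combination `Φ = A·f₁₁·f₂₁ + (B/2)·(f₁₁·f₂₂ + f₁₂·f₂₁) + C·f₁₂·f₂₂`. -/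
noncomputable def diracPhi (A B C : ℝ) (F : ℝ → Matrix (Fin 2) (Fin 2) ℝ) (x : ℝ) : ℝ :=
  A * (F x 0 0) * (F x 1 0) + (B / 2) * ((F x 0 0) * (F x 1 1) + (F x 0 1) * (F x 1 0)) +
    C * (F x 0 1) * (F x 1 1)

theorem hasDerivAt_row_of_hasDerivAt_mul {𝕜 n : Type*} [NontriviallyNormedField 𝕜] [Fintype n]
    {F : 𝕜 → Matrix n n 𝕜} {M : Matrix n n 𝕜} {x : 𝕜} {i : n}
    (hF : ∀ j, HasDerivAt (fun t => F t i j) ((M * F x) i j) x) :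
    HasDerivAt (fun t => F t i) (∑ k, M i k • F x k) x :=
  hasDerivAt_pi.2 fun j => by simpa [Matrix.mul_apply] using hF j

namespace ContinuousLinearMap

variable {𝕜 E G : Type*} [NontriviallyNormedField 𝕜] [NormedAddCommGroup E] [NormedSpace 𝕜 E]
  [NormedAddCommGroup G] [NormedSpace 𝕜 G]

theorem hasDerivAt_of_bilinear_of_traceless_system (b : E →L[𝕜] E →L[𝕜] G) {u v : 𝕜 → E}
    {lam p q x : 𝕜} (hu : HasDerivAt u (lam • u x + p • v x) x)
    (hv : HasDerivAt v (q • u x - lam • v x) x) :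
    HasDerivAt (fun t => b (u t) (v t)) (q • b (u x) (u x) + p • b (v x) (v x)) x := by
  refine (b.hasDerivAt_of_bilinear (fun _ => hu) (fun _ => hv)).congr_deriv ?_
  simp only [map_add, map_sub, map_smul, add_apply, smul_apply]
  abel

end ContinuousLinearMap

/-- The polar form of the binary quadratic form `A a² + B a b + C b²`. -/
noncomputable def binaryPolarForm (A B C : ℝ) : (Fin 2 → ℝ) →L[ℝ] (Fin 2 → ℝ) →L[ℝ] ℝ :=
  (Matrix.toBilin' !![A, B / 2; B / 2, C]).toContinuousBilinearMap

theorem binaryPolarForm_apply (A B C : ℝ) (u v : Fin 2 → ℝ) :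
    binaryPolarForm A B C u v = A * u 0 * v 0 + B / 2 * (u 0 * v 1 + u 1 * v 0) + C * u 1 * v 1 := by
  simp [binaryPolarForm, LinearMap.toContinuousBilinearMap_apply, Matrix.toBilin'_apply',
    dotProduct, Matrix.mulVec, Fin.sum_univ_two]
  ring

theorem diracPhi_eq_binaryPolarForm (A B C : ℝ) (F : ℝ → Matrix (Fin 2) (Fin 2) ℝ) :
    diracPhi A B C F = fun t => binaryPolarForm A B C (F t 0) (F t 1) := by
  ext t
  rw [diracPhi, binaryPolarForm_apply]

theorem diracP_eq_binaryPolarForm (A B C : ℝ) (F : ℝ → Matrix (Fin 2) (Fin 2) ℝ) (x : ℝ) :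
    diracP A B C F x = binaryPolarForm A B C (F x 0) (F x 0) := by
  rw [diracP, binaryPolarForm_apply]
  ring

theorem diracQ_eq_binaryPolarForm (A B C : ℝ) (F : ℝ → Matrix (Fin 2) (Fin 2) ℝ) (x : ℝ) :
    diracQ A B C F x = binaryPolarForm A B C (F x 1) (F x 1) := by
  rw [diracQ, binaryPolarForm_apply]
  ring

theorem dirac_mixed_combination_derivative_general (lam : ℝ) (q₁ q₂ : ℝ → ℝ)
    (F : ℝ → Matrix (Fin 2) (Fin 2) ℝ)
    (hF : ∀ (x : ℝ) (i j : Fin 2),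
      HasDerivAt (fun t => F t i j) ((!![lam, q₁ x; q₂ x, -lam] * F x) i j) x)
    (A B C : ℝ) :
    ∀ x : ℝ, HasDerivAt (diracPhi A B C F)
      (q₂ x * diracP A B C F x + q₁ x * diracQ A B C F x) x := by
  intro x
  have hrow₀ : HasDerivAt (fun t => F t 0) (lam • F x 0 + q₁ x • F x 1) x := by
    simpa [Fin.sum_univ_two] using hasDerivAt_row_of_hasDerivAt_mul (hF x 0)
  have hrow₁ : HasDerivAt (fun t => F t 1) (q₂ x • F x 0 - lam • F x 1) x := by
    simpa [Fin.sum_univ_two, sub_eq_add_neg] using hasDerivAt_row_of_hasDerivAt_mul (hF x 1)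
  rw [diracPhi_eq_binaryPolarForm, diracP_eq_binaryPolarForm, diracQ_eq_binaryPolarForm]
  exact (binaryPolarForm A B C).hasDerivAt_of_bilinear_of_traceless_system hrow₀ hrow₁

/-- For a matrix solution `F` of the Dirac equation, the mixed quadratic
combination `Φ` is differentiable with `Φ' = q₂·P̃ + q₁·Q̃`. -/
theorem dirac_mixed_combination_derivative (lam : ℝ) (q₁ q₂ : ℝ → ℝ)
    (hq₁ : Continuous q₁) (hq₂ : Continuous q₂)
    (F : ℝ → Matrix (Fin 2) (Fin 2) ℝ)
    (hF : ∀ (x : ℝ) (i j : Fin 2),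
      HasDerivAt (fun t => F t i j) ((!![lam, q₁ x; q₂ x, -lam] * F x) i j) x)
    (A B C : ℝ) :
    ∀ x : ℝ, HasDerivAt (diracPhi A B C F)
      (q₂ x * diracP A B C F x + q₁ x * diracQ A B C F x) x :=
  dirac_mixed_combination_derivative_general lam q₁ q₂ F hF A B C
end

section
/- Let λ ∈ ℝ, q₁, q₂ : ℝ → ℝ continuous, and let F : ℝ → Matrix (Fin 2) (Fin 2) ℝ be differentiable with F'(x) = ![![λ, q₁(x)], ![q₂(x), −λ]] · F(x), with entries f₁₁, f₁₂, f₂₁, f₂₂. Fix A, B, C ∈ ℝ and an open interval I ⊆ ℝ on which P̃ := A·f₁₁² + B·f₁₁·f₁₂ + C·f₁₂² > 0 and Q̃ := A·f₂₁² + B·f₂₁·f₂₂ + C·f₂₂² > 0, and set f̃₁ := √P̃, f̃₂ := √Q̃, Φ := A·f₁₁·f₂₁ + (B/2)·(f₁₁·f₂₂ + f₁₂·f₂₁) + C·f₁₂·f₂₂, α := Φ − f̃₁·f̃₂. Then α is differentiable on I and satisfies the linear ODE α' = −α·( q₁·f̃₂/f̃₁ + q₂·f̃₁/f̃₂ ) on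 I. -/
/-- First component `f̃₁ = √P̃` of the partial solution to the deformed Dirac equation. -/
noncomputable def diracFt₁ (A B C : ℝ) (F : ℝ → Matrix (Fin 2) (Fin 2) ℝ) (x : ℝ) : ℝ :=
  Real.sqrt (diracP A B C F x)

/-- Second component `f̃₂ = √Q̃` of the partial solution to the deformed Dirac equation. -/
noncomputable def diracFt₂ (A B C : ℝ) (F : ℝ → Matrix (Fin 2) (Fin 2) ℝ) (x : ℝ) : ℝ :=
  Real.sqrt (diracQ A B C F x)

/-- Deformation coefficient `α = Φ − f̃₁·f̃₂`. -/
noncomputable def diracAlpha (A B C : ℝ) (F : ℝ → Matrix (Fin 2) (Fin 2) ℝ) (x : ℝ) : ℝ :=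
  diracPhi A B C F x - diracFt₁ A B C F x * diracFt₂ A B C F x

/-!
Write `f̃₁ = √P̃`, `f̃₂ = √Q̃`. The rows of `F` obey `r₁' = λ r₁ + q₁ r₂`, `r₂' = q₂ r₁ − λ r₂`,
and `P̃, Φ, Q̃` are the values of one symmetric bilinear form on `(r₁, r₁)`, `(r₁, r₂)`, `(r₂, r₂)`,
so `P̃' = 2λP̃ + 2q₁Φ`, `Q̃' = −2λQ̃ + 2q₂Φ` and `Φ' = q₁Q̃ + q₂P̃`. Hence
`(f̃₁f̃₂)' = Φ·(q₁f̃₂/f̃₁ + q₂f̃₁/f̃₂)` (the `λ` terms cancel) while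
`Φ' = f̃₁f̃₂·(q₁f̃₂/f̃₁ + q₂f̃₁/f̃₂)`; subtracting gives the linear equation for `α = Φ − f̃₁f̃₂`.
-/

open Real

theorem hasDerivAt_sub_sqrt_mul_sqrt {P Q Φ : ℝ → ℝ} {lam p₁ p₂ x : ℝ}
    (hP : HasDerivAt P (2 * lam * P x + 2 * p₁ * Φ x) x)
    (hQ : HasDerivAt Q (-(2 * lam) * Q x + 2 * p₂ * Φ x) x)
    (hΦ : HasDerivAt Φ (p₁ * Q x + p₂ * P x) x) (hP0 : 0 < P x) (hQ0 : 0 < Q x) :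
    HasDerivAt (fun t => Φ t - √(P t) * √(Q t))
      (-(Φ x - √(P x) * √(Q x)) * (p₁ * √(Q x) / √(P x) + p₂ * √(P x) / √(Q x))) x := by
  refine (hΦ.sub ((hP.sqrt hP0.ne').mul (hQ.sqrt hQ0.ne'))).congr_deriv ?_
  have hsP : √(P x) ≠ 0 := (sqrt_pos.mpr hP0).ne'
  have hsQ : √(Q x) ≠ 0 := (sqrt_pos.mpr hQ0).ne'
  have hP2 := sq_sqrt hP0.le
  have hQ2 := sq_sqrt hQ0.le
  set f₁ := √(P x)
  set f₂ := √(Q x)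
  rw [← hP2, ← hQ2]
  field_simp
  ring

section DiracSystem

variable {lam p₁ p₂ x : ℝ} {F : ℝ → Matrix (Fin 2) (Fin 2) ℝ}

theorem hasDerivAt_dirac_row₀
    (hF : ∀ i j : Fin 2, HasDerivAt (fun t => F t i j) ((!![lam, p₁; p₂, -lam] * F x) i j) x)
    (j : Fin 2) : HasDerivAt (fun t => F t 0 j) (lam * F x 0 j + p₁ * F x 1 j) x := by
  simpa [Matrix.mul_apply, Fin.sum_univ_two] using hF 0 j

theorem hasDerivAt_dirac_row₁
    (hF : ∀ i j : Fin 2, HasDerivAt (fun t => F t i j) ((!![lam, p₁; p₂, -lam] * F x) i j) x)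
    (j : Fin 2) : HasDerivAt (fun t => F t 1 j) (p₂ * F x 0 j - lam * F x 1 j) x := by
  simpa [Matrix.mul_apply, Fin.sum_univ_two, sub_eq_add_neg] using hF 1 j

variable (hF : ∀ i j : Fin 2,
  HasDerivAt (fun t => F t i j) ((!![lam, p₁; p₂, -lam] * F x) i j) x) (A B C : ℝ)
include hF

theorem hasDerivAt_diracP :
    HasDerivAt (diracP A B C F) (2 * lam * diracP A B C F x + 2 * p₁ * diracPhi A B C F x) x := by
  have h₀ := hasDerivAt_dirac_row₀ hF 0
  have h₁ := hasDerivAt_dirac_row₀ hF 1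
  refine ((((h₀.pow 2).const_mul A).add ((h₀.const_mul B).mul h₁)).add
    ((h₁.pow 2).const_mul C)).congr_deriv ?_
  simp only [diracP, diracPhi]
  ring

theorem hasDerivAt_diracQ :
    HasDerivAt (diracQ A B C F)
      (-(2 * lam) * diracQ A B C F x + 2 * p₂ * diracPhi A B C F x) x := by
  have h₀ := hasDerivAt_dirac_row₁ hF 0
  have h₁ := hasDerivAt_dirac_row₁ hF 1
  refine ((((h₀.pow 2).const_mul A).add ((h₀.const_mul B).mul h₁)).add
    ((h₁.pow 2).const_mul C)).congr_deriv ?_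
  simp only [diracQ, diracPhi]
  ring

theorem hasDerivAt_diracPhi :
    HasDerivAt (diracPhi A B C F) (p₁ * diracQ A B C F x + p₂ * diracP A B C F x) x := by
  have h₀₀ := hasDerivAt_dirac_row₀ hF 0
  have h₀₁ := hasDerivAt_dirac_row₀ hF 1
  have h₁₀ := hasDerivAt_dirac_row₁ hF 0
  have h₁₁ := hasDerivAt_dirac_row₁ hF 1
  refine ((((h₀₀.const_mul A).mul h₁₀).add
    (((h₀₀.mul h₁₁).add (h₀₁.mul h₁₀)).const_mul (B / 2))).add ((h₀₁.const_mul C).mul h₁₁)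
   ).congr_deriv ?_
  simp only [diracP, diracQ]
  ring

end DiracSystem

theorem deformed_dirac_alpha_ode_general (lam : ℝ) (q₁ q₂ : ℝ → ℝ)
    (F : ℝ → Matrix (Fin 2) (Fin 2) ℝ)
    (hF : ∀ (x : ℝ) (i j : Fin 2),
      HasDerivAt (fun t => F t i j) ((!![lam, q₁ x; q₂ x, -lam] * F x) i j) x)
    (A B C : ℝ) (a b : ℝ)
    (hP : ∀ x ∈ Set.Ioo a b, 0 < diracP A B C F x)
    (hQ : ∀ x ∈ Set.Ioo a b, 0 < diracQ A B C F x) :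
    ∀ x ∈ Set.Ioo a b,
      HasDerivAt (diracAlpha A B C F)
        (-(diracAlpha A B C F x) *
          (q₁ x * diracFt₂ A B C F x / diracFt₁ A B C F x +
           q₂ x * diracFt₁ A B C F x / diracFt₂ A B C F x)) x := fun x hx =>
  hasDerivAt_sub_sqrt_mul_sqrt (hasDerivAt_diracP (hF x) A B C) (hasDerivAt_diracQ (hF x) A B C)
    (hasDerivAt_diracPhi (hF x) A B C) (hP x hx) (hQ x hx)

/-- On an open interval where `P̃ > 0` and `Q̃ > 0`, the deformation
coefficient `α = Φ − f̃₁·f̃₂` is differentiable and satisfies the linear ODE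
`α' = −α·(q₁·f̃₂/f̃₁ + q₂·f̃₁/f̃₂)`. -/
theorem deformed_dirac_alpha_ode (lam : ℝ) (q₁ q₂ : ℝ → ℝ)
    (hq₁ : Continuous q₁) (hq₂ : Continuous q₂)
    (F : ℝ → Matrix (Fin 2) (Fin 2) ℝ)
    (hF : ∀ (x : ℝ) (i j : Fin 2),
      HasDerivAt (fun t => F t i j) ((!![lam, q₁ x; q₂ x, -lam] * F x) i j) x)
    (A B C : ℝ) (a b : ℝ)
    (hP : ∀ x ∈ Set.Ioo a b, 0 < diracP A B C F x)
    (hQ : ∀ x ∈ Set.Ioo a b, 0 < diracQ A B C F x) :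
    ∀ x ∈ Set.Ioo a b,
      HasDerivAt (diracAlpha A B C F)
        (-(diracAlpha A B C F x) *
          (q₁ x * diracFt₂ A B C F x / diracFt₁ A B C F x +
           q₂ x * diracFt₁ A B C F x / diracFt₂ A B C F x)) x :=
  deformed_dirac_alpha_ode_general lam q₁ q₂ F hF A B C a b hP hQ
end
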